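/- arXiv:2410.09899 — 3 statements merged into one kernel-verified Lean document; each statement's English description precedes it below -/
import Mathlib

section
/- Every simplicial fan quadruple is well-sorted. That is, if (𝔛, !𝔅, *ℭ, !*ℌ) is a fan quadruple in ℚ^n such that every cone of 𝔛 is simplicial, then for every cone ξ ∈ 𝔛 the restricted affine fan quadruple on the faces of ξ admits a (ℭ ∩ faces of ξ)-strict sorting function. -/
namespace ToricPaper

open scoped BigOperators

/-- The ambient space `N_ℚ = ℚ^n`. -/
abbrev V (n : ℕ) := Fin n → ℚ

variable {n : ℕ}

/-- The cone of nonnegative rational combinations of elements of `A`. -/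
def coneHull (A : Set (V n)) : Set (V n) :=
  {x | ∃ t : Finset (V n), ↑t ⊆ A ∧ ∃ c : V n → ℚ,
    (∀ v ∈ t, 0 ≤ c v) ∧ x = ∑ v ∈ t, c v • v}

/-- A rational polyhedral cone: the cone generated by finitely many vectors. -/
def IsPolyCone (σ : Set (V n)) : Prop := ∃ S : Finset (V n), σ = coneHull (S : Set (V n))

/-- A cone is strongly convex if it contains no line. -/
def StronglyConvex (σ : Set (V n)) : Prop := ∀ x ∈ σ, -x ∈ σ → x = 0

/-- `F` is a face of `σ`, cut out by a linear functional nonnegative on `σ`. -/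
def IsFaceOf (F σ : Set (V n)) : Prop :=
  ∃ m : (V n) →ₗ[ℚ] ℚ, (∀ x ∈ σ, 0 ≤ m x) ∧ F = {x ∈ σ | m x = 0}

/-- Dimension of a cone: the rank of its linear span. -/
noncomputable def coneDim (σ : Set (V n)) : ℕ := Module.finrank ℚ (Submodule.span ℚ σ)

/-- A ray of a cone is a one-dimensional face. -/
def IsRayOf (ν σ : Set (V n)) : Prop := IsFaceOf ν σ ∧ coneDim ν = 1

/-- An abstract ray: a one-dimensional strongly convex rational polyhedral cone. -/
def IsRay (ν : Set (V n)) : Prop := IsPolyCone ν ∧ StronglyConvex ν ∧ coneDim ν = 1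

/-- All faces of a cone `τ` (the affine fan induced by `τ`). -/
def faces (τ : Set (V n)) : Set (Set (V n)) := {F | IsFaceOf F τ}

/-- The rays of a cone `τ`. -/
def raysOf (τ : Set (V n)) : Set (Set (V n)) := {ν | IsRayOf ν τ}

/-- A fan: a finite collection of strongly convex rational polyhedral cones, closed under
taking faces, such that the intersection of two cones is a face of each. -/
def IsFan (X : Set (Set (V n))) : Prop :=
  X.Finite ∧ (∀ σ ∈ X, IsPolyCone σ ∧ StronglyConvex σ) ∧
  (∀ σ ∈ X, ∀ F, IsFaceOf F σ → F ∈ X) ∧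
  (∀ σ ∈ X, ∀ σ' ∈ X, IsFaceOf (σ ∩ σ') σ ∧ IsFaceOf (σ ∩ σ') σ')

/-- The rays (one-dimensional cones) belonging to a collection of cones. -/
def raysIn (X : Set (Set (V n))) : Set (Set (V n)) := {ν | ν ∈ X ∧ coneDim ν = 1}

/-- The support of a collection of cones. -/
def support (X : Set (Set (V n))) : Set (V n) := ⋃₀ X

/-- The data of a fan quadruple `(X, !B, *C, !*H)`: three pairwise disjoint sets of rays. -/
def IsQuadData (X B C H : Set (Set (V n))) : Prop :=
  B ⊆ raysIn X ∧ C ⊆ raysIn X ∧ H ⊆ raysIn X ∧ Disjoint B C ∧ Disjoint B H ∧ Disjoint C H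

/-- The data of a fan triple `(X, !B, *C)`: two disjoint sets of rays. -/
def IsTripleData (X B C : Set (Set (V n))) : Prop :=
  B ⊆ raysIn X ∧ C ⊆ raysIn X ∧ Disjoint B C

/-- `ρ` is a sorting function for the (restricted) quadruple on the faces of `ξ`:
nonnegative on rays of `ξ` in `B`, nonpositive on rays of `ξ` in `C`, zero on rays of `ξ`
in none of `B`, `C`, `H`. -/
def IsSortingOn (ξ : Set (V n)) (B C H : Set (Set (V n))) (ρ : (V n) →ₗ[ℚ] ℚ) : Prop :=
  (∀ ν, IsRayOf ν ξ → ν ∈ B → ∀ x ∈ ν, 0 ≤ ρ x) ∧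
  (∀ ν, IsRayOf ν ξ → ν ∈ C → ∀ x ∈ ν, ρ x ≤ 0) ∧
  (∀ ν, IsRayOf ν ξ → ν ∉ B → ν ∉ C → ν ∉ H → ∀ x ∈ ν, ρ x = 0)

/-- The (restricted) affine quadruple on the faces of `ξ` admits a `Cf`-strict sorting
function: a sorting function which is moreover negative on `ν ∖ {0}` for every `ν ∈ Cf`. -/
def HasStrictSortingOn (ξ : Set (V n)) (B C H Cf : Set (Set (V n))) : Prop :=
  ∃ ρ : (V n) →ₗ[ℚ] ℚ, IsSortingOn ξ B C H ρ ∧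
    ∀ ν, IsRayOf ν ξ → ν ∈ Cf → ∀ x ∈ ν, x ≠ 0 → ρ x < 0

/-- A cone `ξ` is `E`-unsettled if no ray of `ξ` lies in `E`. -/
def Unsettled (E : Set (Set (V n))) (ξ : Set (V n)) : Prop := ∀ ν, IsRayOf ν ξ → ν ∉ E

/-- The quadruple `(X, !B, *C, !*H)` is `(Bs, Cf, Hs)`-sorted. -/
def SortedOn (X B C H Bs Cf Hs : Set (Set (V n))) : Prop :=
  ∀ ξ ∈ X, Unsettled ((B \ Bs) ∪ (H \ Hs)) ξ → HasStrictSortingOn ξ B C H Cf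

/-- Partially-sorted: `(∅, C, ∅)`-sorted. -/
def PartiallySortedOn (X B C H : Set (Set (V n))) : Prop := SortedOn X B C H ∅ C ∅

/-- Well-sorted: `(B, C, H)`-sorted. -/
def WellSortedOn (X B C H : Set (Set (V n))) : Prop := SortedOn X B C H B C H

/-- A simplicial cone is generated by linearly independent vectors. -/
def IsSimplicialCone (σ : Set (V n)) : Prop :=
  ∃ S : Finset (V n), LinearIndependent ℚ (fun v : S => (v : V n)) ∧
    σ = coneHull (S : Set (V n))

/-- A collection of cones is `E`-simplicial: every cone having a ray of `E` as a face is the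
join of that ray with a cone of the collection of one less dimension. -/
def ESimplicialOn (X E : Set (Set (V n))) : Prop :=
  ∀ ν ∈ E, ∀ σ ∈ X, IsFaceOf ν σ →
    ∃ ζ ∈ X, σ = coneHull (ζ ∪ ν) ∧ coneDim σ = coneDim ζ + 1

/-- A subdivision of a fan: a fan with the same support, every cone of which is contained in
a cone of the base. -/
def IsSubdivision (X' X : Set (Set (V n))) : Prop :=
  IsFan X' ∧ support X' = support X ∧ ∀ σ' ∈ X', ∃ σ ∈ X, σ' ⊆ σ

/-- A subdivision is efficient if it introduces no new rays. -/
def IsEfficient (X' X : Set (Set (V n))) : Prop := raysIn X' = raysIn X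

/-- `ψ` is a good (convex piecewise-linear) function for the subdivision `X'` relative to the
cones of the base fan `X`: on each cone `τ` of `X`, `ψ` is convex, linear on each cone of
`X'` contained in `τ`, and the maximal subcones of linearity of `ψ` inside `τ` are exactly
the cones of `X'` (i.e. any convex subset of `τ` on which `ψ` is linear lies in one of them). -/
def IsGoodFor (X X' : Set (Set (V n))) (ψ : V n → ℚ) : Prop :=
  ∀ τ ∈ X, ConvexOn ℚ τ ψ ∧
    (∀ σ' ∈ X', σ' ⊆ τ → ∃ m : (V n) →ₗ[ℚ] ℚ, ∀ x ∈ σ', ψ x = m x) ∧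
    (∀ (m : (V n) →ₗ[ℚ] ℚ) (t : Set (V n)), t ⊆ τ → Convex ℚ t →
      (∀ x ∈ t, ψ x = m x) → ∃ σ' ∈ X', σ' ⊆ τ ∧ t ⊆ σ')

/-- Sign conditions of a good sorting function with respect to the quadruple data on `X'`. -/
def SignedOn (X' B' C' H' : Set (Set (V n))) (ψ : V n → ℚ) : Prop :=
  (∀ ν ∈ B', ∀ x ∈ ν, 0 ≤ ψ x) ∧ (∀ ν ∈ C', ∀ x ∈ ν, ψ x ≤ 0) ∧
  (∀ ν ∈ raysIn X', ν ∉ B' → ν ∉ C' → ν ∉ H' → ∀ x ∈ ν, ψ x = 0)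

/-- Sign conditions restricted to the rays contained in a cone `τ`. -/
def SignedOnIn (τ : Set (V n)) (X' B' C' H' : Set (Set (V n))) (ψ : V n → ℚ) : Prop :=
  (∀ ν ∈ B', ν ⊆ τ → ∀ x ∈ ν, 0 ≤ ψ x) ∧ (∀ ν ∈ C', ν ⊆ τ → ∀ x ∈ ν, ψ x ≤ 0) ∧
  (∀ ν ∈ raysIn X', ν ⊆ τ → ν ∉ B' → ν ∉ C' → ν ∉ H' → ∀ x ∈ ν, ψ x = 0)

/-- A convex subdivision, with respect to a fan quadruple structure on `X'`. -/
def IsConvexSubdiv (X' X B' C' H' : Set (Set (V n))) : Prop :=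
  IsSubdivision X' X ∧ ∃ ψ : V n → ℚ, IsGoodFor X X' ψ ∧ SignedOn X' B' C' H' ψ

/-- A locally-convex subdivision: for each cone of the base there is a good sorting function
on that cone. -/
def IsLocallyConvexSubdiv (X' X B' C' H' : Set (Set (V n))) : Prop :=
  IsSubdivision X' X ∧
    ∀ τ ∈ X, ∃ ψ : V n → ℚ, IsGoodFor {τ} X' ψ ∧ SignedOnIn τ X' B' C' H' ψ

/-- Star subdivision of `X` at a ray `ν` contained in the support of `X`. -/
def starSubdiv (X : Set (Set (V n))) (ν : Set (V n)) : Set (Set (V n)) :=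
  {σ | σ ∈ X ∧ ¬ ν ⊆ σ} ∪
  {τ | ∃ σ ∈ X, ν ⊆ σ ∧ ∃ ξ, IsFaceOf ξ σ ∧ ¬ ν ⊆ ξ ∧ τ = coneHull (ξ ∪ ν)}

/-- The set `S` of facets used in the extension construction `Ext(𝔗, ν)`. -/
noncomputable def extS (τ ν : Set (V n)) : Set (Set (V n)) :=
  if coneDim (coneHull (τ ∪ ν)) = coneDim τ + 1 then {τ}
  else {ζ | (IsFaceOf ζ τ ∧ coneDim ζ + 1 = coneDim τ) ∧
    ∃ m : (V n) →ₗ[ℚ] ℚ, (∀ x ∈ ζ, m x = 0) ∧ (∃ v ∈ ν, v ≠ 0 ∧ m v = -1) ∧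
      ∀ x ∈ τ, x ∉ ζ → 0 < m x}

/-- All faces of cones of `extS τ ν`. -/
noncomputable def extFaces (τ ν : Set (V n)) : Set (Set (V n)) :=
  {ξ | ∃ ζ ∈ extS τ ν, IsFaceOf ξ ζ}

/-- The extension `Ext(𝔗, ν)` of the affine fan of `τ` by the ray `ν`. -/
noncomputable def Ext (τ ν : Set (V n)) : Set (Set (V n)) :=
  {ν} ∪ faces τ ∪ (fun ξ => coneHull (ξ ∪ ν)) '' extFaces τ ν

/-- The extension `Ext(𝔗', ν)` of a subdivision `𝒯'` of the affine fan of `τ` by the ray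
`ν`. -/
noncomputable def ExtSub (T' : Set (Set (V n))) (τ ν : Set (V n)) : Set (Set (V n)) :=
  {ν} ∪ T' ∪ (fun ξ => coneHull (ξ ∪ ν)) ''
    {ξ | ∃ ζ' ∈ T', (∃ ζ ∈ extS τ ν, ζ' ⊆ ζ) ∧ IsFaceOf ξ ζ'}

/-- Sequential convexity of a sequence of star subdivisions (the list gives the rays in the
order in which the star subdivisions are performed). -/
def SeqConvex (B C H : Set (Set (V n))) : Set (Set (V n)) → List (Set (V n)) → Prop
  | _, [] => True
  | X, ν :: rest =>
      IsLocallyConvexSubdiv (starSubdiv X ν) X B C H ∧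
      SeqConvex B C H (starSubdiv X ν) rest

/-! A face of the cone spanned by a finite set `S` is spanned by the generators it contains, so
when `S` is linearly independent every ray is the half-line through a single generator. A linear
functional can take arbitrary values on a linearly independent set; one that is `-1` on the
generators of the rays in `C` and `0` on all other generators is therefore a `C`-strict sorting
function on a simplicial cone. -/

def raySet (v : V n) : Set (V n) := {x | ∃ c : ℚ, 0 ≤ c ∧ x = c • v}

lemma subset_coneHull (A : Set (V n)) : A ⊆ coneHull A :=
  fun v hv => ⟨{v}, by simpa using hv, fun _ => 1, by simp, by simp⟩

lemma coneHull_subset_span (A : Set (V n)) : coneHull A ⊆ Submodule.span ℚ A := by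
  rintro x ⟨t, htA, c, -, rfl⟩
  exact Submodule.sum_mem _ fun v hv => Submodule.smul_mem _ _ (Submodule.subset_span (htA hv))

lemma span_coneHull (A : Set (V n)) : Submodule.span ℚ (coneHull A) = Submodule.span ℚ A :=
  Submodule.span_eq_span (coneHull_subset_span A) ((subset_coneHull A).trans Submodule.subset_span)

lemma mem_coneHull_finset {S : Finset (V n)} {x : V n} :
    x ∈ coneHull (S : Set (V n)) ↔
      ∃ c : V n → ℚ, (∀ v ∈ S, 0 ≤ c v) ∧ x = ∑ v ∈ S, c v • v := by
  classical
  constructor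
  · rintro ⟨t, htS, c, hc, rfl⟩
    refine ⟨fun v => if v ∈ t then c v else 0, fun v _ => ?_, ?_⟩
    · dsimp only
      split_ifs with hv
      exacts [hc v hv, le_rfl]
    · rw [← Finset.sum_subset (Finset.coe_subset.mp htS) fun v _ hvt => by simp [hvt]]
      exact Finset.sum_congr rfl fun v hv => by simp [hv]
  · rintro ⟨c, hc, rfl⟩
    exact ⟨S, subset_rfl, c, hc, rfl⟩

lemma coneHull_singleton (v : V n) : coneHull {v} = raySet v := by
  ext x
  rw [← Finset.coe_singleton, mem_coneHull_finset]
  simp only [Finset.mem_singleton, forall_eq, Finset.sum_singleton]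
  exact ⟨fun ⟨c, hc, hx⟩ => ⟨c v, hc, hx⟩, fun ⟨a, ha, hx⟩ => ⟨fun _ => a, ha, hx⟩⟩

lemma face_coneHull_finset_eq {S : Finset (V n)} {m : V n →ₗ[ℚ] ℚ}
    (hm : ∀ x ∈ coneHull (S : Set (V n)), 0 ≤ m x) :
    {x ∈ coneHull (S : Set (V n)) | m x = 0} = coneHull ↑(S.filter fun v => m v = 0) := by
  ext x
  constructor
  · rintro ⟨hx, hmx⟩
    obtain ⟨c, hc, rfl⟩ := mem_coneHull_finset.mp hx
    have hterm : ∀ v ∈ S, c v * m v = 0 := by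
      refine (Finset.sum_eq_zero_iff_of_nonneg fun v hv =>
        mul_nonneg (hc v hv) (hm v (subset_coneHull _ hv))).mp ?_
      simpa using hmx
    refine mem_coneHull_finset.mpr ⟨c, fun v hv => hc v (Finset.mem_filter.mp hv).1, ?_⟩
    refine (Finset.sum_filter_of_ne fun v hv hcv => ?_).symm
    exact (mul_eq_zero.mp (hterm v hv)).resolve_left (left_ne_zero_of_smul hcv)
  · rintro ⟨t, ht, c, hc, rfl⟩
    have hmt : ∀ v ∈ t, m v = 0 := fun v hv => (Finset.mem_filter.mp (ht hv)).2
    refine ⟨⟨t, ht.trans (Finset.coe_subset.mpr (Finset.filter_subset _ S)), c, hc, rfl⟩, ?_⟩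
    simp only [map_sum, map_smul, smul_eq_mul]
    exact Finset.sum_eq_zero fun v hv => by rw [hmt v hv, mul_zero]

lemma IsRayOf.exists_eq_raySet {S : Finset (V n)} (hS : LinearIndepOn ℚ id (S : Set (V n)))
    {ν : Set (V n)} (hν : IsRayOf ν (coneHull S)) : ∃ v ∈ S, ν = raySet v := by
  classical
  obtain ⟨⟨m, hm, rfl⟩, hdim⟩ := hν
  rw [face_coneHull_finset_eq hm] at hdim ⊢
  set T := S.filter fun v => m v = 0
  have hT : LinearIndepOn ℚ id (T : Set (V n)) :=
    hS.mono (Finset.coe_subset.mpr (Finset.filter_subset _ S))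
  have hcard : T.card = 1 := by
    rw [← finrank_span_finset_eq_card hT, ← span_coneHull]
    exact hdim
  obtain ⟨v, hv⟩ := Finset.card_eq_one.mp hcard
  refine ⟨v, Finset.filter_subset _ S (hv ▸ Finset.mem_singleton_self v), ?_⟩
  rw [hv, Finset.coe_singleton, coneHull_singleton]

lemma exists_linearMap_eq_of_linearIndepOn {K W : Type*} [Field K] [AddCommGroup W]
    [Module K W] {s : Set W} (hs : LinearIndepOn K id s) (f : W → K) :
    ∃ ρ : W →ₗ[K] K, ∀ v ∈ s, ρ v = f v := by
  refine ⟨(Module.Basis.extend hs).constr K fun i => f i, fun v hv => ?_⟩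
  have := (Module.Basis.extend hs).constr_basis K (fun i => f i) ⟨v, hs.subset_extend _ hv⟩
  rwa [Module.Basis.extend_apply_self] at this

theorem hasStrictSortingOn_coneHull_of_linearIndepOn {S : Finset (V n)}
    (hS : LinearIndepOn ℚ id (S : Set (V n))) {B C : Set (Set (V n))} (hBC : Disjoint B C)
    (H : Set (Set (V n))) : HasStrictSortingOn (coneHull S) B C H C := by
  classical
  obtain ⟨ρ, hρ⟩ := exists_linearMap_eq_of_linearIndepOn hS
    fun v => if raySet v ∈ C then (-1 : ℚ) else 0
  have hρ_notMem : ∀ ν, IsRayOf ν (coneHull S) → ν ∉ C → ∀ x ∈ ν, ρ x = 0 := by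
    intro ν hν hνC x hx
    obtain ⟨v, hv, rfl⟩ := hν.exists_eq_raySet hS
    obtain ⟨c, -, rfl⟩ := hx
    simp [hρ v hv, hνC]
  have hρ_mem : ∀ ν, IsRayOf ν (coneHull S) → ν ∈ C → ∀ x ∈ ν, x ≠ 0 → ρ x < 0 := by
    intro ν hν hνC x hx hx0
    obtain ⟨v, hv, rfl⟩ := hν.exists_eq_raySet hS
    obtain ⟨c, hc, rfl⟩ := hx
    have hc_pos : 0 < c := hc.lt_of_ne (left_ne_zero_of_smul hx0).symm
    simpa [hρ v hv, hνC] using hc_pos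
  refine ⟨ρ, ⟨fun ν hν hνB x hx => ?_, fun ν hν hνC x hx => ?_,
    fun ν hν _ hνC _ => hρ_notMem ν hν hνC⟩, hρ_mem⟩
  · exact (hρ_notMem ν hν (Set.disjoint_left.mp hBC hνB) x hx).ge
  · rcases eq_or_ne x 0 with rfl | hx0
    · simp
    · exact (hρ_mem ν hν hνC x hx hx0).le

theorem simplicial_fan_quadruple_is_wellSorted_general {n : ℕ} (X B C H : Set (Set (V n)))
    (hQ : IsQuadData X B C H)
    (hsimp : ∀ σ ∈ X, IsSimplicialCone σ) :
    WellSortedOn X B C H := by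
  intro ξ hξ _
  obtain ⟨S, hS, rfl⟩ := hsimp ξ hξ
  exact hasStrictSortingOn_coneHull_of_linearIndepOn hS hQ.2.2.2.1 H

/-- Every simplicial fan quadruple is well-sorted. -/
theorem simplicial_fan_quadruple_is_wellSorted {n : ℕ} (X B C H : Set (Set (V n)))
    (hFan : IsFan X) (hQ : IsQuadData X B C H)
    (hsimp : ∀ σ ∈ X, IsSimplicialCone σ) :
    WellSortedOn X B C H :=
  simplicial_fan_quadruple_is_wellSorted_general X B C H hQ hsimp

end ToricPaper
end

section
/- Assume a fan quadruple (𝔛, !𝔅, *ℭ, !*ℌ) is (𝔅♯, ℭ♭, ℌ♯)-sorted. Let 𝔅°, ℭ°, ℌ° be pairwise disjoint sets of rays of 𝔛 satisfying ℌ° ⊇ ℌ, 𝔅° ∪ ℌ° ⊇ 𝔅 ∪ ℌ, ℭ° ∪ ℌ° ⊇ ℭ ∪ ℌ, 𝔅° ⊇ 𝔅♯, and ℭ° ⊇ ℭ♭. Then the fan quadruple (𝔛, !𝔅°, *ℭ°, !*ℌ°) is also (𝔅♯, ℭ♭, ℌ♯)-sorted. -/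
namespace ToricPaper

open scoped BigOperators

variable {n : ℕ}

/-- Sortedness is preserved when the boundary ray sets are enlarged as
prescribed. -/
theorem sorted_of_enlarged_boundary {n : ℕ}
    (X B C H B' C' H' Bs Cf Hs : Set (Set (V n)))
    (hFan : IsFan X) (hQ : IsQuadData X B C H) (hQ' : IsQuadData X B' C' H')
    (hBs : Bs ⊆ B) (hCf : Cf ⊆ C) (hHs : Hs ⊆ H)
    (h₁ : H ⊆ H') (h₂ : B ∪ H ⊆ B' ∪ H') (h₃ : C ∪ H ⊆ C' ∪ H')
    (h₄ : Bs ⊆ B') (h₅ : Cf ⊆ C')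
    (hsorted : SortedOn X B C H Bs Cf Hs) :
    SortedOn X B' C' H' Bs Cf Hs := by
  obtain ⟨hB, hC, hH, hBC, hBH, hCH⟩ := hQ
  obtain ⟨hB', hC', hH', hBC', hBH', hCH'⟩ := hQ'
  intro ξ hξ huns
  -- ξ is unsettled for the old quadruple
  have huns' : Unsettled ((B \ Bs) ∪ (H \ Hs)) ξ := by
    intro ν hν hmem
    rcases hmem with ⟨hνB, hνBs⟩ | ⟨hνH, hνHs⟩
    · have : ν ∈ B' ∪ H' := h₂ (Or.inl hνB)
      rcases this with hB'ν | hH'ν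
      · exact huns ν hν (Or.inl ⟨hB'ν, hνBs⟩)
      · have hνnH : ν ∉ H := fun h => (hBH.le_bot ⟨hνB, h⟩)
        exact huns ν hν (Or.inr ⟨hH'ν, fun h => hνnH (hHs h)⟩)
    · exact huns ν hν (Or.inr ⟨h₁ hνH, hνHs⟩)
  obtain ⟨ρ, ⟨hρB, hρC, hρ0⟩, hρCf⟩ := hsorted ξ hξ huns'
  refine ⟨ρ, ⟨?_, ?_, ?_⟩, hρCf⟩
  · -- rays in B'
    intro ν hν hνB' x hx
    by_cases hνBs : ν ∈ Bs
    · exact hρB ν hν (hBs hνBs) x hx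
    · exact absurd (Or.inl ⟨hνB', hνBs⟩) (huns ν hν)
  · -- rays in C'
    intro ν hν hνC' x hx
    by_cases hνC : ν ∈ C
    · exact hρC ν hν hνC x hx
    · have hνnB : ν ∉ B := by
        intro hνB
        rcases h₂ (Or.inl hνB) with hB'ν | hH'ν
        · exact hBC'.le_bot ⟨hB'ν, hνC'⟩
        · have hνnH : ν ∉ H := fun h => hBH.le_bot ⟨hνB, h⟩
          exact huns ν hν (Or.inr ⟨hH'ν, fun h => hνnH (hHs h)⟩)
      have hνnH : ν ∉ H := fun h => hCH'.le_bot ⟨hνC', h₁ h⟩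
      exact le_of_eq (hρ0 ν hν hνnB hνC hνnH x hx)
  · -- rays in none of B', C', H'
    intro ν hν hνB' hνC' hνH' x hx
    have hνnB : ν ∉ B := fun h => (h₂ (Or.inl h)).elim hνB' hνH'
    have hνnC : ν ∉ C := fun h => (h₃ (Or.inl h)).elim hνC' hνH'
    have hνnH : ν ∉ H := fun h => hνH' (h₁ h)
    exact hρ0 ν hν hνnB hνnC hνnH x hx

end ToricPaper
end

section
/- Let 𝔗 be the affine fan induced by a strongly convex rational polyhedral cone τ and let ν be a ray not contained in τ such that Cone(τ, ν) is strongly convex. Then Ext(𝔗, ν) is a fan. Moreover, if 𝔗 is 𝔈-simplicial for a set of rays 𝔈 of 𝔗, then Ext(𝔗, ν) is (𝔈 ∪ {ν})-simplicial. -/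
namespace ToricPaper

open scoped BigOperators

variable {n : ℕ}

/-!
Write `ν = Cone(v)`. Every cone of `S`, every face of one, and also `{0}` (by Farkas' lemma, as
`v ∉ τ`) lies on a supporting hyperplane `β = 0` of `τ` with `β ≤ 0` on `τ` and `β v = 1`, and
`Cone({0}, ν) = ν`. Such a `β` gives unique coordinates `x = (x - β x • v) + β x • v` on
`Cone(ξ, ν)`. From them one reads off that `Cone(ξ, ν) ∩ τ = ξ`, that the faces of `Cone(ξ, ν)`
are the faces of `ξ` and their joins with `ν`, that two joins meet in the join of `ξ ∩ ξ'`, and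
that joining raises the dimension by one. These identities reduce the fan axioms and the
simpliciality of the extension to those of the affine fan of `τ`.
-/

lemma coneHull_eq_hull (A : Set (V n)) : coneHull A = (PointedCone.hull ℚ A : Set (V n)) := by
  ext x
  constructor
  · rintro ⟨t, ht, c, hc, rfl⟩
    refine Submodule.sum_mem (PointedCone.hull ℚ A) fun v hv => ?_
    exact Submodule.smul_mem _ (⟨c v, hc v hv⟩ : {c : ℚ // 0 ≤ c}) (Submodule.subset_span (ht hv))
  · rw [SetLike.mem_coe, Submodule.mem_span_iff_exists_finset_subset]
    rintro ⟨f, t, ht, -, rfl⟩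
    exact ⟨t, ht, fun v => f v, fun v _ => (f v).2, rfl⟩

lemma coneHull_subset_coneHull {A B : Set (V n)} (h : A ⊆ coneHull B) :
    coneHull A ⊆ coneHull B := by
  rw [coneHull_eq_hull, coneHull_eq_hull] at *
  exact SetLike.coe_subset_coe.mpr (Submodule.span_le.mpr h)

lemma coneHull_mono {A B : Set (V n)} (h : A ⊆ B) : coneHull A ⊆ coneHull B :=
  coneHull_subset_coneHull (h.trans (subset_coneHull B))

lemma zero_mem_coneHull (A : Set (V n)) : (0 : V n) ∈ coneHull A := by
  rw [coneHull_eq_hull]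
  exact zero_mem _

lemma add_mem_coneHull {A : Set (V n)} {x y : V n} (hx : x ∈ coneHull A)
    (hy : y ∈ coneHull A) : x + y ∈ coneHull A := by
  rw [coneHull_eq_hull] at *
  exact add_mem hx hy

lemma smul_mem_coneHull {A : Set (V n)} {x : V n} {t : ℚ} (ht : 0 ≤ t)
    (hx : x ∈ coneHull A) : t • x ∈ coneHull A := by
  rw [coneHull_eq_hull] at *
  exact Submodule.smul_mem _ (⟨t, ht⟩ : {c : ℚ // 0 ≤ c}) hx

lemma sum_mem_coneHull {A : Set (V n)} {ι : Type*} {t : Finset ι} {f : ι → V n}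
    (h : ∀ i ∈ t, f i ∈ coneHull A) : ∑ i ∈ t, f i ∈ coneHull A := by
  simp only [coneHull_eq_hull] at *
  exact Submodule.sum_mem _ h

lemma coneHull_coneHull_union (A B : Set (V n)) :
    coneHull (coneHull A ∪ B) = coneHull (A ∪ B) := by
  simp only [coneHull_eq_hull, Submodule.span_union, Submodule.span_eq]

lemma coneHull_coneHull (A : Set (V n)) : coneHull (coneHull A) = coneHull A := by
  simp only [coneHull_eq_hull, Submodule.span_eq]

lemma IsPolyCone.coneHull_eq {σ : Set (V n)} (hσ : IsPolyCone σ) : coneHull σ = σ := by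
  obtain ⟨S, rfl⟩ := hσ
  exact coneHull_coneHull _

lemma mem_coneHull_union {A B : Set (V n)} {x : V n} :
    x ∈ coneHull (A ∪ B) ↔ ∃ y ∈ coneHull A, ∃ z ∈ coneHull B, y + z = x := by
  simp only [coneHull_eq_hull, SetLike.mem_coe, Submodule.span_union, Submodule.mem_sup]

lemma mem_coneHull_singleton {v x : V n} : x ∈ coneHull {v} ↔ ∃ t : ℚ, 0 ≤ t ∧ t • v = x := by
  rw [coneHull_eq_hull, SetLike.mem_coe, Submodule.mem_span_singleton]
  exact ⟨fun ⟨a, ha⟩ => ⟨a, a.2, ha⟩, fun ⟨t, ht, h⟩ => ⟨⟨t, ht⟩, h⟩⟩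

lemma map_nonneg_of_mem_coneHull {A : Set (V n)} (m : V n →ₗ[ℚ] ℚ) (h : ∀ a ∈ A, 0 ≤ m a)
    {x : V n} (hx : x ∈ coneHull A) : 0 ≤ m x := by
  rw [coneHull_eq_hull] at hx
  exact (Submodule.span_le (p := (PointedCone.positive ℚ ℚ).comap m)).mpr h hx

lemma map_eq_zero_of_mem_coneHull {A : Set (V n)} (m : V n →ₗ[ℚ] ℚ) (h : ∀ a ∈ A, m a = 0)
    {x : V n} (hx : x ∈ coneHull A) : m x = 0 :=
  (Submodule.span_le (p := LinearMap.ker m)).mpr h (coneHull_subset_span A hx)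

lemma StronglyConvex.mono {σ τ : Set (V n)} (hτ : StronglyConvex τ) (h : σ ⊆ τ) :
    StronglyConvex σ :=
  fun x hx hx' => hτ x (h hx) (h hx')

lemma IsFaceOf.subset {F σ : Set (V n)} (h : IsFaceOf F σ) : F ⊆ σ := by
  obtain ⟨m, -, rfl⟩ := h
  exact Set.sep_subset _ _

lemma IsFaceOf.refl (σ : Set (V n)) : IsFaceOf σ σ :=
  ⟨0, by simp, by simp⟩

lemma IsFaceOf.inter {F F' σ : Set (V n)} (hF : IsFaceOf F σ) (hF' : IsFaceOf F' σ) :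
    IsFaceOf (F ∩ F') F := by
  obtain ⟨m, -, rfl⟩ := hF
  obtain ⟨m', hm', rfl⟩ := hF'
  refine ⟨m', fun x hx => hm' x hx.1, ?_⟩
  ext x
  exact ⟨fun ⟨hx, _, hx'⟩ => ⟨hx, hx'⟩, fun ⟨hx, hx'⟩ => ⟨hx, hx.1, hx'⟩⟩

lemma IsFaceOf.of_subset {F G σ : Set (V n)} (hF : IsFaceOf F σ) (hG : IsFaceOf G σ)
    (h : G ⊆ F) : IsFaceOf G F := by
  simpa [Set.inter_eq_right.mpr h] using hF.inter hG

lemma sep_coneHull_eq_coneHull_filter (S : Finset (V n)) (m : V n →ₗ[ℚ] ℚ)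
    (hm : ∀ s ∈ S, 0 ≤ m s) :
    {x ∈ coneHull (S : Set (V n)) | m x = 0} = coneHull ↑(S.filter (m · = 0)) := by
  refine Set.Subset.antisymm ?_ fun x hx =>
    ⟨coneHull_mono (Finset.coe_subset.mpr (Finset.filter_subset _ _)) hx,
      map_eq_zero_of_mem_coneHull m (fun s hs => (Finset.mem_filter.mp hs).2) hx⟩
  rintro x ⟨⟨t, ht, c, hc, rfl⟩, hx⟩
  -- every term of the combination is nonnegative under `m`, so each one vanishes
  have hterm : ∀ v ∈ t, c v * m v = 0 :=
    (Finset.sum_eq_zero_iff_of_nonneg fun v hv => mul_nonneg (hc v hv) (hm v (ht hv))).mp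
      (by simpa using hx)
  refine sum_mem_coneHull fun v hv => ?_
  rcases mul_eq_zero.mp (hterm v hv) with h | h
  · simp [h, zero_mem_coneHull]
  · exact smul_mem_coneHull (hc v hv) (subset_coneHull _ (by simpa [h] using ht hv))

lemma IsFaceOf.isPolyCone {F σ : Set (V n)} (hσ : IsPolyCone σ) (h : IsFaceOf F σ) :
    IsPolyCone F := by
  classical
  obtain ⟨S, rfl⟩ := hσ
  obtain ⟨m, hm, rfl⟩ := h
  exact ⟨_, sep_coneHull_eq_coneHull_filter S m fun s hs => hm s (subset_coneHull _ hs)⟩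

lemma finite_faces {σ : Set (V n)} (hσ : IsPolyCone σ) : (faces σ).Finite := by
  classical
  obtain ⟨S, rfl⟩ := hσ
  refine (S.powerset.finite_toSet.image fun T : Finset (V n) => coneHull (T : Set (V n))).subset ?_
  rintro F ⟨m, hm, rfl⟩
  refine ⟨S.filter (m · = 0),
    Finset.mem_coe.mpr (Finset.mem_powerset.mpr (Finset.filter_subset _ _)), ?_⟩
  exact (sep_coneHull_eq_coneHull_filter S m fun s hs => hm s (subset_coneHull _ hs)).symm

lemma IsFaceOf.trans {G F σ : Set (V n)} (hσ : IsPolyCone σ) (hGF : IsFaceOf G F)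
    (hFσ : IsFaceOf F σ) : IsFaceOf G σ := by
  classical
  obtain ⟨S, rfl⟩ := hσ
  obtain ⟨m, hm, rfl⟩ := hFσ
  obtain ⟨m', hm', rfl⟩ := hGF
  -- `M = m' + N • m` with `N` so large that `M > 0` on the generators where `m > 0`
  obtain ⟨N, hN⟩ := (S.image fun s => (1 + |m' s|) / m s).exists_le
  set M : V n →ₗ[ℚ] ℚ := m' + N • m
  have hMS : ∀ s ∈ S, 0 ≤ M s ∧ (M s = 0 → m s = 0 ∧ m' s = 0) := by
    intro s hs
    have hMs : M s = m' s + N * m s := rfl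
    rcases (hm s (subset_coneHull _ hs)).eq_or_lt with h | h
    · rw [hMs, ← h, mul_zero, add_zero]
      exact ⟨hm' s ⟨subset_coneHull _ hs, h.symm⟩, fun h' => ⟨rfl, h'⟩⟩
    · have hNs := (div_le_iff₀ h).mp (hN _ (Finset.mem_image_of_mem _ hs))
      have : 0 < M s := by rw [hMs]; linarith [neg_abs_le (m' s)]
      exact ⟨this.le, fun h' => absurd h' this.ne'⟩
  refine ⟨M, fun x hx => map_nonneg_of_mem_coneHull M (fun s hs => (hMS s hs).1) hx, ?_⟩
  ext x
  constructor
  · rintro ⟨⟨hx, hmx⟩, hm'x⟩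
    exact ⟨hx, by simp [M, hmx, hm'x]⟩
  · intro hx
    have hx' := sep_coneHull_eq_coneHull_filter S M (fun s hs => (hMS s hs).1) ▸ hx
    have hgen : ∀ s ∈ (↑(S.filter (M · = 0)) : Set (V n)), m s = 0 ∧ m' s = 0 := fun s hs => by
      rw [Finset.coe_filter] at hs
      exact (hMS s hs.1).2 hs.2
    exact ⟨⟨hx.1, map_eq_zero_of_mem_coneHull m (fun s hs => (hgen s hs).1) hx'⟩,
      map_eq_zero_of_mem_coneHull m' (fun s hs => (hgen s hs).2) hx'⟩

lemma exists_dual_vanishing_eq {W : Submodule ℚ (V n)} {v : V n} (hv : v ∉ W) (c : ℚ) :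
    ∃ m : V n →ₗ[ℚ] ℚ, (∀ w ∈ W, m w = 0) ∧ m v = c := by
  obtain ⟨m, hmW, hmv⟩ := LinearMap.exists_extend_of_notMem (0 : W →ₗ[ℚ] ℚ) hv c
  exact ⟨m, fun w hw => by simpa using LinearMap.congr_fun hmW ⟨w, hw⟩, hmv⟩

/-- Farkas' lemma. -/
theorem exists_dual_nonneg_of_notMem_coneHull (S : Finset (V n)) {x : V n}
    (hx : x ∉ coneHull (S : Set (V n))) :
    ∃ m : V n →ₗ[ℚ] ℚ, (∀ s ∈ S, 0 ≤ m s) ∧ m x < 0 := by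
  classical
  obtain ⟨k, hk⟩ : ∃ k, S.card ≤ k := ⟨_, le_rfl⟩
  induction k generalizing S x with
  | zero =>
    obtain rfl : S = ∅ := Finset.card_eq_zero.mp (Nat.le_zero.mp hk)
    have hx0 : x ∉ (⊥ : Submodule ℚ (V n)) := fun h =>
      hx ((Submodule.mem_bot ℚ).mp h ▸ zero_mem_coneHull _)
    obtain ⟨m, -, hm⟩ := exists_dual_vanishing_eq hx0 (-1)
    exact ⟨m, by simp, by simp [hm]⟩
  | succ k ih =>
    rcases S.eq_empty_or_nonempty with rfl | ⟨s, hs⟩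
    · exact ih ∅ hx (by simp)
    obtain ⟨m, hmS, hmx⟩ := ih (S.erase s) (fun h => hx (coneHull_mono (by simp) h))
      (by rw [Finset.card_erase_of_mem hs]; omega)
    by_cases hms : 0 ≤ m s
    · refine ⟨m, fun s' hs' => ?_, hmx⟩
      rcases eq_or_ne s' s with rfl | hne
      · exact hms
      · exact hmS s' (Finset.mem_erase.mpr ⟨hne, hs'⟩)
    -- project along `s` onto `ker m` and separate `x` from the projected generators
    rw [not_le] at hms
    set p : V n →ₗ[ℚ] V n := LinearMap.id - (m s)⁻¹ • m.smulRight s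
    have hp : ∀ y, p y = y - ((m s)⁻¹ * m y) • s := fun y => by simp [p, smul_smul]
    have hps : p s = 0 := by rw [hp, inv_mul_cancel₀ hms.ne, one_smul, sub_self]
    have hpS : ∀ y ∈ S.erase s, p y ∈ coneHull (S : Set (V n)) := by
      intro y hy
      rw [hp, sub_eq_add_neg, ← neg_smul]
      have : 0 ≤ -((m s)⁻¹ * m y) := by
        have := mul_nonpos_of_nonpos_of_nonneg (inv_lt_zero.mpr hms).le (hmS y hy)
        linarith
      exact add_mem_coneHull (subset_coneHull _ (Finset.mem_of_mem_erase hy))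
        (smul_mem_coneHull this (subset_coneHull _ hs))
    have hpx : p x ∉ coneHull ↑((S.erase s).image p) := by
      intro hpx
      have hpx' : p x ∈ coneHull (S : Set (V n)) :=
        coneHull_subset_coneHull (fun _ hy => by
          obtain ⟨y, hy', rfl⟩ := Finset.mem_image.mp (Finset.mem_coe.mp hy)
          exact hpS y hy') hpx
      have hcoef : 0 ≤ (m s)⁻¹ * m x :=
        mul_nonneg_of_nonpos_of_nonpos (inv_lt_zero.mpr hms).le hmx.le
      refine hx ?_
      have := add_mem_coneHull hpx' (smul_mem_coneHull hcoef (subset_coneHull _ hs))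
      rwa [hp, sub_add_cancel] at this
    obtain ⟨m', hm'S, hm'x⟩ := ih _ hpx (Finset.card_image_le.trans (by
      rw [Finset.card_erase_of_mem hs]; omega))
    refine ⟨m'.comp p, fun s' hs' => ?_, hm'x⟩
    rcases eq_or_ne s' s with rfl | hne
    · simp [hps]
    · exact hm'S _ (Finset.mem_image_of_mem p (Finset.mem_erase.mpr ⟨hne, hs'⟩))

theorem IsPolyCone.exists_dual_nonneg_of_notMem {σ : Set (V n)} (hσ : IsPolyCone σ) {x : V n}
    (hx : x ∉ σ) : ∃ m : V n →ₗ[ℚ] ℚ, (∀ y ∈ σ, 0 ≤ m y) ∧ m x < 0 := by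
  obtain ⟨S, rfl⟩ := hσ
  obtain ⟨m, hmS, hmx⟩ := exists_dual_nonneg_of_notMem_coneHull S hx
  exact ⟨m, fun y hy => map_nonneg_of_mem_coneHull m hmS hy, hmx⟩

lemma exists_dual_pos_of_stronglyConvex (S : Finset (V n))
    (hsc : StronglyConvex (coneHull (S : Set (V n)))) :
    ∃ m : V n →ₗ[ℚ] ℚ, (∀ y ∈ coneHull (S : Set (V n)), 0 ≤ m y) ∧ ∀ s ∈ S, s ≠ 0 → 0 < m s := by
  classical
  -- for each nonzero generator `s`, separate `-s` from the cone; then add up the functionals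
  have key : ∀ s ∈ S, s ≠ 0 →
      ∃ m : V n →ₗ[ℚ] ℚ, (∀ y ∈ coneHull (S : Set (V n)), 0 ≤ m y) ∧ 0 < m s := by
    intro s hs hs0
    obtain ⟨m, hm, hms⟩ := IsPolyCone.exists_dual_nonneg_of_notMem ⟨S, rfl⟩ fun h =>
      hs0 (hsc s (subset_coneHull _ hs) h)
    exact ⟨m, hm, by simpa using hms⟩
  choose! f hf using key
  have hf' : ∀ t ∈ S.filter (· ≠ 0), ∀ y ∈ coneHull (S : Set (V n)), 0 ≤ f t y :=
    fun t ht => (hf t (Finset.mem_filter.mp ht).1 (Finset.mem_filter.mp ht).2).1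
  refine ⟨∑ t ∈ S.filter (· ≠ 0), f t, fun y hy => ?_, fun s hs hs0 => ?_⟩
  · rw [LinearMap.sum_apply]
    exact Finset.sum_nonneg fun t ht => hf' t ht y hy
  · rw [LinearMap.sum_apply]
    exact Finset.sum_pos' (fun t ht => hf' t ht s (subset_coneHull _ hs))
      ⟨s, Finset.mem_filter.mpr ⟨hs, hs0⟩, (hf s hs hs0).2⟩

theorem IsPolyCone.isFaceOf_zero {σ : Set (V n)} (hσ : IsPolyCone σ) (hsc : StronglyConvex σ) :
    IsFaceOf {0} σ := by
  classical
  obtain ⟨S, rfl⟩ := hσ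
  obtain ⟨m, hm, hmS⟩ := exists_dual_pos_of_stronglyConvex S hsc
  refine ⟨m, hm, ?_⟩
  rw [sep_coneHull_eq_coneHull_filter S m fun s hs => hm s (subset_coneHull _ hs)]
  refine Set.Subset.antisymm (by simpa using zero_mem_coneHull _) fun x hx => ?_
  have hspan : Submodule.span ℚ (↑(S.filter (m · = 0)) : Set (V n)) = ⊥ :=
    Submodule.span_eq_bot.mpr fun s hs => by
      rw [Finset.coe_filter] at hs
      by_contra hs0
      exact (hmS s hs.1 hs0).ne' hs.2
  have := coneHull_subset_span _ hx
  rw [hspan] at this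
  exact (Submodule.mem_bot ℚ).mp this

theorem IsRay.exists_eq_coneHull_singleton {ν : Set (V n)} (hν : IsRay ν) :
    ∃ v : V n, v ≠ 0 ∧ ν = coneHull {v} := by
  obtain ⟨hpoly, hsc, hdim⟩ := hν
  obtain ⟨v, hvν, hv0⟩ : ∃ v ∈ ν, v ≠ 0 := by
    by_contra! h
    rw [coneDim, Submodule.span_eq_bot.mpr h, finrank_bot] at hdim
    exact zero_ne_one hdim
  have hspan : ℚ ∙ v = Submodule.span ℚ ν :=
    Submodule.eq_of_le_of_finrank_eq (Submodule.span_mono (Set.singleton_subset_iff.mpr hvν))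
      (by rw [finrank_span_singleton hv0]; exact hdim.symm)
  refine ⟨v, hv0, Set.Subset.antisymm (fun x hx => ?_) ?_⟩
  · obtain ⟨c, rfl⟩ := Submodule.mem_span_singleton.mp (hspan ▸ Submodule.subset_span hx)
    rw [mem_coneHull_singleton]
    rcases le_or_gt 0 c with hc | hc
    · exact ⟨c, hc, rfl⟩
    -- otherwise `c • v` and `-(c • v)` both lie in `ν`
    have hneg : -(c • v) ∈ ν := by
      rw [← neg_smul, ← hpoly.coneHull_eq]
      exact smul_mem_coneHull (by linarith) (subset_coneHull _ hvν)
    exact ⟨0, le_rfl, by rw [zero_smul, hsc _ hx hneg]⟩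
  · rw [← hpoly.coneHull_eq]
    exact coneHull_mono (Set.singleton_subset_iff.mpr hvν)

/-- `Cone(ξ, ν)` for the ray `ν = Cone(v)`. -/
def join (ξ : Set (V n)) (v : V n) : Set (V n) := coneHull (ξ ∪ coneHull {v})

section Join

variable {ξ F G : Set (V n)} {v : V n} {β : V n →ₗ[ℚ] ℚ}

lemma subset_join : ξ ⊆ join ξ v :=
  Set.subset_union_left.trans (subset_coneHull _)

lemma join_mono {ξ' : Set (V n)} (h : ξ ⊆ ξ') : join ξ v ⊆ join ξ' v :=
  coneHull_mono (Set.union_subset_union_left _ h)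

lemma mem_join_self : v ∈ join ξ v :=
  subset_coneHull _ (Or.inr (subset_coneHull _ rfl))

lemma add_smul_mem_join {y : V n} {t : ℚ} (hy : y ∈ ξ) (ht : 0 ≤ t) : y + t • v ∈ join ξ v :=
  add_mem_coneHull (subset_join hy) (smul_mem_coneHull ht mem_join_self)

lemma IsPolyCone.join (hξ : IsPolyCone ξ) : IsPolyCone (join ξ v) := by
  classical
  obtain ⟨T, rfl⟩ := hξ
  refine ⟨insert v T, ?_⟩
  rw [join, coneHull_coneHull_union, Set.union_comm, coneHull_coneHull_union, Finset.coe_insert,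
    Set.insert_eq]

lemma mem_join_iff (hξ : IsPolyCone ξ) (hβv : β v = 1) (hβξ : ∀ y ∈ ξ, β y = 0) {x : V n} :
    x ∈ join ξ v ↔ 0 ≤ β x ∧ x - β x • v ∈ ξ := by
  refine ⟨fun hx => ?_, fun ⟨hx, hxξ⟩ => by simpa using add_smul_mem_join (v := v) hxξ hx⟩
  obtain ⟨y, hy, z, hz, rfl⟩ := mem_coneHull_union.mp hx
  rw [hξ.coneHull_eq] at hy
  rw [coneHull_coneHull] at hz
  obtain ⟨t, ht, rfl⟩ := mem_coneHull_singleton.mp hz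
  have : β (y + t • v) = t := by simp [hβξ y hy, hβv]
  rw [this]
  exact ⟨ht, by simpa using hy⟩

lemma isFaceOf_join (hξ : IsPolyCone ξ) (hβv : β v = 1) (hβξ : ∀ y ∈ ξ, β y = 0) :
    IsFaceOf ξ (join ξ v) := by
  refine ⟨β, fun x hx => ((mem_join_iff hξ hβv hβξ).mp hx).1, Set.ext fun x => ?_⟩
  rw [Set.mem_sep_iff, mem_join_iff hξ hβv hβξ]
  refine ⟨fun hx => ?_, fun ⟨⟨_, hx⟩, h0⟩ => by simpa [h0] using hx⟩
  simp [hβξ x hx, hx]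

lemma IsFaceOf.join (hξ : IsPolyCone ξ) (hβv : β v = 1) (hβξ : ∀ y ∈ ξ, β y = 0)
    (hF : IsFaceOf F ξ) : IsFaceOf (join F v) (join ξ v) := by
  have hFpoly := hF.isPolyCone hξ
  have hβF : ∀ y ∈ F, β y = 0 := fun y hy => hβξ y (hF.subset hy)
  obtain ⟨m, hm, rfl⟩ := hF
  -- `m - m v • β` evaluates `m` on the `ξ`-component of a point of `join ξ v`
  have hγ : ∀ x, (m - m v • β) x = m (x - β x • v) := fun x => by simp [mul_comm]
  refine ⟨m - m v • β, fun x hx => ?_, Set.ext fun x => ?_⟩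
  · rw [hγ]
    exact hm _ ((mem_join_iff hξ hβv hβξ).mp hx).2
  · rw [Set.mem_sep_iff, mem_join_iff hFpoly hβv hβF, mem_join_iff hξ hβv hβξ, hγ,
      Set.mem_sep_iff, and_assoc]

lemma StronglyConvex.join (hsc : StronglyConvex ξ) (hξ : IsPolyCone ξ) (hβv : β v = 1)
    (hβξ : ∀ y ∈ ξ, β y = 0) : StronglyConvex (join ξ v) := by
  intro x hx hx'
  rw [mem_join_iff hξ hβv hβξ] at hx hx'
  have h0 : β x = 0 := by simp only [map_neg] at hx'; linarith [hx.1, hx'.1]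
  simp only [h0, zero_smul, sub_zero, map_neg, neg_zero] at hx hx'
  exact hsc x hx.2 hx'.2

lemma coneDim_join (hβv : β v = 1) (hβξ : ∀ y ∈ ξ, β y = 0) :
    coneDim (join ξ v) = coneDim ξ + 1 := by
  have hv : v ∉ Submodule.span ℚ ξ := fun h => by
    simpa [hβv] using (Submodule.span_le (p := LinearMap.ker β)).mpr hβξ h
  rw [coneDim, coneDim, join, span_coneHull, Submodule.span_union, span_coneHull,
    Submodule.finrank_sup_span_singleton hv]

lemma isFaceOf_join_cases (hξ : IsPolyCone ξ) (hβv : β v = 1) (hβξ : ∀ y ∈ ξ, β y = 0)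
    (hG : IsFaceOf G (join ξ v)) : (∃ F, IsFaceOf F ξ ∧ G = join F v) ∨ IsFaceOf G ξ := by
  obtain ⟨m, hm, rfl⟩ := hG
  have hmξ : ∀ y ∈ ξ, 0 ≤ m y := fun y hy => hm y (subset_join hy)
  have hFpoly : IsPolyCone {y ∈ ξ | m y = 0} := IsFaceOf.isPolyCone hξ ⟨m, hmξ, rfl⟩
  have hβF : ∀ y ∈ {y ∈ ξ | m y = 0}, β y = 0 := fun y hy => hβξ y hy.1
  have hsplit : ∀ x, m x = m (x - β x • v) + β x * m v := fun x => by simp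
  have hmv : 0 ≤ m v := hm v mem_join_self
  rcases hmv.eq_or_lt with hmv | hmv
  · -- `m` vanishes on `v`: the face is the join of the face `ξ ∩ ker m` of `ξ`
    refine Or.inl ⟨_, ⟨m, hmξ, rfl⟩, Set.ext fun x => ?_⟩
    rw [Set.mem_sep_iff, mem_join_iff hξ hβv hβξ, mem_join_iff hFpoly hβv hβF, Set.mem_sep_iff,
      hsplit x, ← hmv, mul_zero, add_zero, and_assoc]
  · -- `m` is positive on `v`: the face lies in `ξ`
    refine Or.inr ⟨m, hmξ, Set.ext fun x => ?_⟩
    rw [Set.mem_sep_iff, Set.mem_sep_iff, mem_join_iff hξ hβv hβξ]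
    constructor
    · rintro ⟨⟨hβx, hx⟩, hmx⟩
      have h0 : β x = 0 := by nlinarith [hmξ _ hx, hsplit x]
      rw [h0, zero_smul, sub_zero] at hx
      exact ⟨hx, hmx⟩
    · rintro ⟨hx, hmx⟩
      simp [hβξ x hx, hx, hmx]

end Join

/-- The hyperplane `β = 0` through `ξ` separates `τ` from `v`; this is what keeps
`Cone(ξ, ν)` from meeting `τ` outside `ξ`. -/
def visibleFaces (τ : Set (V n)) (v : V n) : Set (Set (V n)) :=
  {ξ | IsFaceOf ξ τ ∧ ∃ β : V n →ₗ[ℚ] ℚ, β v = 1 ∧ (∀ y ∈ ξ, β y = 0) ∧ ∀ x ∈ τ, β x ≤ 0}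

section VisibleFaces

variable {τ ξ ξ' σ : Set (V n)} {v : V n}

lemma mem_visibleFaces_of_isFaceOf (hτ : IsPolyCone τ) (hξ : ξ ∈ visibleFaces τ v)
    (hF : IsFaceOf σ ξ) : σ ∈ visibleFaces τ v := by
  obtain ⟨hξτ, β, hβv, hβξ, hβτ⟩ := hξ
  exact ⟨hF.trans hτ hξτ, β, hβv, fun y hy => hβξ y (hF.subset hy), hβτ⟩

lemma inter_join_of_subset (hτ : IsPolyCone τ) (hξ : ξ ∈ visibleFaces τ v) (hσ : σ ⊆ τ) :
    σ ∩ join ξ v = σ ∩ ξ := by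
  obtain ⟨hξτ, β, hβv, hβξ, hβτ⟩ := hξ
  refine Set.Subset.antisymm (fun x ⟨hxσ, hx⟩ => ⟨hxσ, ?_⟩) fun x ⟨hxσ, hx⟩ => ⟨hxσ, subset_join hx⟩
  rw [mem_join_iff (hξτ.isPolyCone hτ) hβv hβξ] at hx
  have h0 : β x = 0 := le_antisymm (hβτ x (hσ hxσ)) hx.1
  simpa [h0] using hx.2

lemma join_inter_join (hτ : IsPolyCone τ) (hξ : ξ ∈ visibleFaces τ v)
    (hξ' : ξ' ∈ visibleFaces τ v) : join ξ v ∩ join ξ' v = join (ξ ∩ ξ') v := by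
  obtain ⟨hξτ, β, hβv, hβξ, hβτ⟩ := hξ
  obtain ⟨hξ'τ, β', hβ'v, hβ'ξ', hβ'τ⟩ := hξ'
  refine Set.Subset.antisymm ?_ (Set.subset_inter (join_mono Set.inter_subset_left)
    (join_mono Set.inter_subset_right))
  rintro x ⟨hx, hx'⟩
  rw [mem_join_iff (hξτ.isPolyCone hτ) hβv hβξ] at hx
  rw [mem_join_iff (hξ'τ.isPolyCone hτ) hβ'v hβ'ξ'] at hx'
  -- each functional is nonpositive on the other face, so both read off the same `v`-coordinate
  have h1 := hβτ _ (hξ'τ.subset hx'.2)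
  have h2 := hβ'τ _ (hξτ.subset hx.2)
  simp only [map_sub, map_smul, smul_eq_mul, hβv, hβ'v, mul_one] at h1 h2
  have heq : β' x = β x := by linarith
  simpa using add_smul_mem_join (ξ := ξ ∩ ξ') (v := v) ⟨hx.2, by rw [← heq]; exact hx'.2⟩ hx.1

end VisibleFaces

def joinFan (τ : Set (V n)) (𝒮 : Set (Set (V n))) (v : V n) : Set (Set (V n)) :=
  faces τ ∪ (join · v) '' 𝒮

section JoinFan

variable {τ : Set (V n)} {𝒮 : Set (Set (V n))} {v : V n}

lemma isFaceOf_inter_of_mem_joinFan (hτ : IsPolyCone τ) (h𝒮 : 𝒮 ⊆ visibleFaces τ v)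
    {σ σ' : Set (V n)} (hσ : σ ∈ joinFan τ 𝒮 v) (hσ' : σ' ∈ joinFan τ 𝒮 v) :
    IsFaceOf (σ ∩ σ') σ := by
  rcases hσ with hσ | ⟨ξ, hξ, rfl⟩ <;> rcases hσ' with hσ' | ⟨ξ', hξ', rfl⟩
  · exact hσ.inter hσ'
  · rw [inter_join_of_subset hτ (h𝒮 hξ') hσ.subset]
    exact hσ.inter (h𝒮 hξ').1
  · obtain ⟨hξτ, β, hβv, hβξ, -⟩ := h𝒮 hξ
    have hξpoly := hξτ.isPolyCone hτ
    rw [Set.inter_comm, inter_join_of_subset hτ (h𝒮 hξ) hσ'.subset, Set.inter_comm]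
    exact (hξτ.inter hσ').trans hξpoly.join (isFaceOf_join hξpoly hβv hβξ)
  · obtain ⟨hξτ, β, hβv, hβξ, -⟩ := h𝒮 hξ
    rw [join_inter_join hτ (h𝒮 hξ) (h𝒮 hξ')]
    exact (hξτ.inter (h𝒮 hξ').1).join (hξτ.isPolyCone hτ) hβv hβξ

theorem isFan_joinFan (hτ : IsPolyCone τ) (hsc : StronglyConvex τ) (h𝒮 : 𝒮 ⊆ visibleFaces τ v)
    (h𝒮faces : ∀ ξ ∈ 𝒮, ∀ F, IsFaceOf F ξ → F ∈ 𝒮) : IsFan (joinFan τ 𝒮 v) := by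
  refine ⟨(finite_faces hτ).union (((finite_faces hτ).subset fun ξ hξ => (h𝒮 hξ).1).image _),
    ?_, ?_, fun σ hσ σ' hσ' => ⟨isFaceOf_inter_of_mem_joinFan hτ h𝒮 hσ hσ',
      Set.inter_comm σ' σ ▸ isFaceOf_inter_of_mem_joinFan hτ h𝒮 hσ' hσ⟩⟩
  · rintro σ (hσ | ⟨ξ, hξ, rfl⟩)
    · exact ⟨hσ.isPolyCone hτ, hsc.mono hσ.subset⟩
    · obtain ⟨hξτ, β, hβv, hβξ, -⟩ := h𝒮 hξ
      have hξpoly := hξτ.isPolyCone hτ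
      exact ⟨hξpoly.join, (hsc.mono hξτ.subset).join hξpoly hβv hβξ⟩
  · rintro σ (hσ | ⟨ξ, hξ, rfl⟩) G hG
    · exact Or.inl (hG.trans hτ hσ)
    · obtain ⟨hξτ, β, hβv, hβξ, -⟩ := h𝒮 hξ
      rcases isFaceOf_join_cases (hξτ.isPolyCone hτ) hβv hβξ hG with ⟨F, hF, rfl⟩ | hG
      · exact Or.inr ⟨F, h𝒮faces ξ hξ F hF, rfl⟩
      · exact Or.inl (hG.trans hτ hξτ)

theorem eSimplicialOn_joinFan (hτ : IsPolyCone τ) (hvτ : v ∉ τ) (h𝒮 : 𝒮 ⊆ visibleFaces τ v)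
    (h𝒮faces : ∀ ξ ∈ 𝒮, ∀ F, IsFaceOf F ξ → F ∈ 𝒮) {E : Set (Set (V n))}
    (hE : ∀ ρ ∈ E, IsFaceOf ρ τ) (hEs : ESimplicialOn (faces τ) E) :
    ESimplicialOn (joinFan τ 𝒮 v) (E ∪ {coneHull {v}}) := by
  rintro ρ (hρ | rfl) σ hσ hρσ
  · rcases hσ with hσ | ⟨ξ, hξ, rfl⟩
    · obtain ⟨ζ, hζ, h⟩ := hEs ρ hρ σ hσ hρσ
      exact ⟨ζ, Or.inl hζ, h⟩
    obtain ⟨hξτ, β, hβv, hβξ, -⟩ := h𝒮 hξ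
    have hξpoly := hξτ.isPolyCone hτ
    have hρξ : ρ ⊆ ξ := Set.inter_eq_left.mp <| by
      rw [← inter_join_of_subset hτ (h𝒮 hξ) (hE ρ hρ).subset, Set.inter_eq_left.mpr hρσ.subset]
    obtain ⟨η, hη, rfl, hdim⟩ :=
      hEs ρ hρ _ hξτ ((isFaceOf_join hξpoly hβv hβξ).of_subset hρσ hρξ)
    have hηξ : IsFaceOf η (coneHull (η ∪ ρ)) :=
      hξτ.of_subset hη (Set.subset_union_left.trans (subset_coneHull _))
    refine ⟨join η v, Or.inr ⟨η, h𝒮faces _ hξ η hηξ, rfl⟩, ?_, ?_⟩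
    · simp only [join]
      rw [coneHull_coneHull_union, coneHull_coneHull_union, Set.union_right_comm]
    · rw [coneDim_join hβv hβξ, coneDim_join hβv fun y hy => hβξ y (hηξ.subset hy), hdim]
  · rcases hσ with hσ | ⟨ξ, hξ, rfl⟩
    · exact absurd (hσ.subset (hρσ.subset (subset_coneHull _ rfl))) hvτ
    · obtain ⟨hξτ, β, hβv, hβξ, -⟩ := h𝒮 hξ
      exact ⟨ξ, Or.inl hξτ, rfl, coneDim_join hβv hβξ⟩

end JoinFan

section Extension

variable {τ : Set (V n)} {v : V n}

lemma extS_subset_visibleFaces : extS τ (coneHull {v}) ⊆ visibleFaces τ v := by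
  intro ζ hζ
  unfold extS at hζ
  split_ifs at hζ with hdim
  · obtain rfl : ζ = τ := hζ
    have hv : v ∉ Submodule.span ℚ ζ := fun hv => by
      have : coneDim (coneHull (ζ ∪ coneHull {v})) = coneDim ζ := by
        rw [coneDim, coneDim, span_coneHull, Submodule.span_union, span_coneHull,
          sup_eq_left.mpr (Submodule.span_le.mpr (Set.singleton_subset_iff.mpr hv))]
      omega
    obtain ⟨β, hβζ, hβv⟩ := exists_dual_vanishing_eq hv 1
    have hβ : ∀ y ∈ ζ, β y = 0 := fun y hy => hβζ y (Submodule.subset_span hy)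
    exact ⟨IsFaceOf.refl ζ, β, hβv, hβ, fun x hx => (hβ x hx).le⟩
  · obtain ⟨⟨hζτ, -⟩, m, hmζ, ⟨w, hw, -, hmw⟩, hmτ⟩ := hζ
    obtain ⟨t, ht, rfl⟩ := mem_coneHull_singleton.mp hw
    simp only [map_smul, smul_eq_mul] at hmw
    refine ⟨hζτ, -t • m, by simp [hmw], fun y hy => by simp [hmζ y hy], fun x hx => ?_⟩
    have hmx : 0 ≤ m x := by
      by_cases hxζ : x ∈ ζ
      · exact (hmζ x hxζ).ge
      · exact (hmτ x hx hxζ).le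
    simpa using mul_nonneg ht hmx

lemma zero_mem_visibleFaces (hτ : IsPolyCone τ) (hsc : StronglyConvex τ) (hvτ : v ∉ τ) :
    {0} ∈ visibleFaces τ v := by
  obtain ⟨m, hm, hmv⟩ := hτ.exists_dual_nonneg_of_notMem hvτ
  refine ⟨hτ.isFaceOf_zero hsc, (m v)⁻¹ • m, by simp [hmv.ne], by simp, fun x hx => ?_⟩
  simpa using mul_nonpos_of_nonpos_of_nonneg (inv_lt_zero.mpr hmv).le (hm x hx)

lemma eq_zero_of_isFaceOf_zero {F : Set (V n)} (h : IsFaceOf F {0}) : F = {0} := by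
  obtain ⟨m, -, rfl⟩ := h
  ext x
  simp +contextual

lemma insert_zero_extFaces_subset_visibleFaces (hτ : IsPolyCone τ) (hsc : StronglyConvex τ)
    (hvτ : v ∉ τ) : insert {0} (extFaces τ (coneHull {v})) ⊆ visibleFaces τ v := by
  rintro ξ (rfl | ⟨ζ, hζ, hξζ⟩)
  · exact zero_mem_visibleFaces hτ hsc hvτ
  · exact mem_visibleFaces_of_isFaceOf hτ (extS_subset_visibleFaces hζ) hξζ

lemma mem_insert_zero_extFaces_of_isFaceOf (hτ : IsPolyCone τ) :
    ∀ ξ ∈ insert {0} (extFaces τ (coneHull {v})), ∀ F, IsFaceOf F ξ →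
      F ∈ insert {0} (extFaces τ (coneHull {v})) := by
  intro ξ hξ F hF
  rcases hξ with rfl | ⟨ζ, hζ, hξζ⟩
  · exact Or.inl (eq_zero_of_isFaceOf_zero hF)
  · exact Or.inr ⟨ζ, hζ, hF.trans ((extS_subset_visibleFaces hζ).1.isPolyCone hτ) hξζ⟩

/-- The ray `ν` itself is the join of the face `{0}`. -/
lemma ext_eq_joinFan :
    Ext τ (coneHull {v}) = joinFan τ (insert {0} (extFaces τ (coneHull {v}))) v := by
  have h0 : join {0} v = coneHull {v} := by
    rw [join, Set.union_eq_right.mpr (Set.singleton_subset_iff.mpr (zero_mem_coneHull _)),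
      coneHull_coneHull]
  rw [joinFan, Set.image_insert_eq, h0, Ext, Set.insert_eq, Set.union_assoc, Set.union_left_comm]
  rfl

end Extension

theorem ext_isFan_and_simplicial_general {n : ℕ} (τ ν : Set (V n))
    (hτ : IsPolyCone τ) (hsc : StronglyConvex τ)
    (hν : IsRay ν) (hns : ¬ ν ⊆ τ) :
    IsFan (Ext τ ν) ∧
      ∀ E ⊆ raysOf τ, ESimplicialOn (faces τ) E → ESimplicialOn (Ext τ ν) (E ∪ {ν}) := by
  obtain ⟨v, -, rfl⟩ := hν.exists_eq_coneHull_singleton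
  have hvτ : v ∉ τ := fun hv =>
    hns (hτ.coneHull_eq ▸ coneHull_mono (Set.singleton_subset_iff.mpr hv))
  have h𝒮 := insert_zero_extFaces_subset_visibleFaces hτ hsc hvτ
  have h𝒮faces := mem_insert_zero_extFaces_of_isFaceOf (v := v) hτ
  rw [ext_eq_joinFan]
  exact ⟨isFan_joinFan hτ hsc h𝒮 h𝒮faces, fun E hE hEs =>
    eSimplicialOn_joinFan hτ hvτ h𝒮 h𝒮faces (fun ρ hρ => (hE hρ).1) hEs⟩

/-- `Ext(𝔗, ν)` is a fan; if `𝔗` is `E`-simplicial then `Ext(𝔗, ν)` is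
`(E ∪ {ν})`-simplicial. -/
theorem ext_isFan_and_simplicial {n : ℕ} (τ ν : Set (V n))
    (hτ : IsPolyCone τ) (hsc : StronglyConvex τ)
    (hν : IsRay ν) (hns : ¬ ν ⊆ τ) (hsc' : StronglyConvex (coneHull (τ ∪ ν))) :
    IsFan (Ext τ ν) ∧
      ∀ E ⊆ raysOf τ, ESimplicialOn (faces τ) E → ESimplicialOn (Ext τ ν) (E ∪ {ν}) :=
  ext_isFan_and_simplicial_general τ ν hτ hsc hν hns

end ToricPaper
end
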